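/- For the function f(t, x) = (3^{1/3} t³ + x^{4/3} t + 1)^{1/3} on [0,1] × [0,∞), for every ℓ ∈ (0,1), every t ∈ [0,1], and every x ≥ 0, one has f(t, ℓx) ≥ ℓ^{4/9} f(t, x). -/
import Mathlib


theorem f_subhomogeneous (ℓ t x : ℝ) (hℓ : ℓ ∈ Set.Ioo (0:ℝ) 1)
    (ht : t ∈ Set.Icc (0:ℝ) 1) (hx : 0 ≤ x) :
    ((3:ℝ) ^ ((1:ℝ)/3) * t ^ 3 + (ℓ * x) ^ ((4:ℝ)/3) * t + 1) ^ ((1:ℝ)/3)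
      ≥ ℓ ^ ((4:ℝ)/9) *
        ((3:ℝ) ^ ((1:ℝ)/3) * t ^ 3 + x ^ ((4:ℝ)/3) * t + 1) ^ ((1:ℝ)/3) := by
  obtain ⟨hℓ0, hℓ1⟩ := hℓ
  obtain ⟨ht0, ht1⟩ := ht
  have hℓ0' : (0:ℝ) ≤ ℓ := le_of_lt hℓ0
  have hA : (0:ℝ) ≤ (3:ℝ) ^ ((1:ℝ)/3) * t ^ 3 := by positivity
  have hB : (0:ℝ) ≤ x ^ ((4:ℝ)/3) * t := by positivity
  have hInner : (0:ℝ) ≤ (3:ℝ) ^ ((1:ℝ)/3) * t ^ 3 + x ^ ((4:ℝ)/3) * t + 1 := by positivity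
  have hc1 : ℓ ^ ((4:ℝ)/3) ≤ 1 := Real.rpow_le_one hℓ0' (le_of_lt hℓ1) (by norm_num)
  have hc0 : (0:ℝ) ≤ ℓ ^ ((4:ℝ)/3) := Real.rpow_nonneg hℓ0' _
  have hmul : (ℓ * x) ^ ((4:ℝ)/3) = ℓ ^ ((4:ℝ)/3) * x ^ ((4:ℝ)/3) :=
    Real.mul_rpow hℓ0' hx
  have key : ℓ ^ ((4:ℝ)/3) * ((3:ℝ) ^ ((1:ℝ)/3) * t ^ 3 + x ^ ((4:ℝ)/3) * t + 1)
      ≤ (3:ℝ) ^ ((1:ℝ)/3) * t ^ 3 + (ℓ * x) ^ ((4:ℝ)/3) * t + 1 := by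
    rw [hmul]
    nlinarith [mul_nonneg hc0 hA, mul_nonneg hc0 hB]
  have hpow := Real.rpow_le_rpow (by positivity) key (by norm_num : (0:ℝ) ≤ (1:ℝ)/3)
  rw [Real.mul_rpow hc0 hInner, ← Real.rpow_mul hℓ0'] at hpow
  norm_num at hpow
  exact hpow
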